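/- Let p > 2, ν > 0, α, β > 1 with α + β = p, and let γ ∈ ℝ. Suppose φ, ψ : ℝ → ℝ are twice differentiable, positive functions satisfying −φ''(t) + γφ(t) = φ(t)^{p-1} + να φ(t)^{α-1}ψ(t)^{β} and −ψ''(t) + γψ(t) = ψ(t)^{p-1} + νβ φ(t)^{α}ψ(t)^{β-1} for all t ∈ ℝ. Then for every t ∈ ℝ, (φ'ψ − φψ')'(t) + φ(t)ψ(t)^{p-1} g(φ(t)/ψ(t)) = 0, where g(s) = s^{p-2} + να s^{α-2} − 1 − νβ s^{α} for s > 0. -/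

import Mathlib

open Real

noncomputable section

/-! Substituting the two equations into (φ'ψ − φψ')' = φ''ψ − φψ'' cancels the γ terms, and each
remaining power term is `φ ψ^(p-1) (φ/ψ)^x` for the matching exponent `x`. -/

theorem deriv_deriv_mul_sub_mul_deriv {𝕜 : Type*} [NontriviallyNormedField 𝕜] {f g : 𝕜 → 𝕜}
    {x : 𝕜} (hf : DifferentiableAt 𝕜 f x) (hf' : DifferentiableAt 𝕜 (deriv f) x)
    (hg : DifferentiableAt 𝕜 g x) (hg' : DifferentiableAt 𝕜 (deriv g) x) :
    deriv (fun y => deriv f y * g y - f y * deriv g y) x =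
      deriv (deriv f) x * g x - f x * deriv (deriv g) x := by
  rw [deriv_fun_sub (hf'.fun_mul hg) (hf.fun_mul hg'), deriv_fun_mul hf' hg,
    deriv_fun_mul hf hg']
  ring

theorem mul_rpow_mul_div_rpow {a b : ℝ} (ha : 0 < a) (hb : 0 < b) {p x m n : ℝ}
    (hm : x + 1 = m) (hn : p - 1 - x = n) :
    a * b ^ (p - 1) * (a / b) ^ x = a ^ m * b ^ n := by
  subst hm hn
  rw [div_rpow ha.le hb.le, rpow_add_one ha.ne', rpow_sub hb (p - 1) x]
  field_simp

theorem stmt_general (p ν α β γ : ℝ)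
    (hαβ : α + β = p)
    (φ ψ : ℝ → ℝ)
    (hφ : Differentiable ℝ φ) (hφ' : Differentiable ℝ (deriv φ))
    (hψ : Differentiable ℝ ψ) (hψ' : Differentiable ℝ (deriv ψ))
    (hφpos : ∀ t : ℝ, 0 < φ t) (hψpos : ∀ t : ℝ, 0 < ψ t)
    (hφeq : ∀ t : ℝ, -(deriv (deriv φ) t) + γ * φ t =
      φ t ^ (p-1) + ν*α * φ t ^ (α-1) * ψ t ^ β)
    (hψeq : ∀ t : ℝ, -(deriv (deriv ψ) t) + γ * ψ t =
      ψ t ^ (p-1) + ν*β * φ t ^ α * ψ t ^ (β-1)) :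
    ∀ t : ℝ,
      deriv (fun s => deriv φ s * ψ s - φ s * deriv ψ s) t +
        φ t * ψ t ^ (p-1) *
          ((φ t / ψ t) ^ (p-2) + ν*α * (φ t / ψ t) ^ (α-2) - 1 - ν*β * (φ t / ψ t) ^ α) = 0 := by
  intro t
  rw [deriv_deriv_mul_sub_mul_deriv (hφ t) (hφ' t) (hψ t) (hψ' t)]
  have ha := hφpos t
  have hb := hψpos t
  set a := φ t
  set b := ψ t
  have k1 : a * b ^ (p - 1) * (a / b) ^ (p - 2) = a ^ (p - 1) * b := by
    simpa using mul_rpow_mul_div_rpow (n := 1) ha hb (by ring) (by ring)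
  have k2 : a * b ^ (p - 1) * (a / b) ^ (α - 2) = a ^ (α - 1) * (b ^ β * b) := by
    rw [← rpow_add_one hb.ne']
    exact mul_rpow_mul_div_rpow ha hb (by ring) (by linarith)
  have k3 : a * b ^ (p - 1) * (a / b) ^ α = a ^ α * a * b ^ (β - 1) := by
    rw [← rpow_add_one ha.ne']
    exact mul_rpow_mul_div_rpow ha hb rfl (by linarith)
  linear_combination (-b) * hφeq t + a * hψeq t + k1 + ν * α * k2 - ν * β * k3

theorem stmt (p ν α β γ : ℝ) (hp : 2 < p) (hν : 0 < ν) (hα : 1 < α) (hβ : 1 < β)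
    (hαβ : α + β = p)
    (φ ψ : ℝ → ℝ)
    (hφ : Differentiable ℝ φ) (hφ' : Differentiable ℝ (deriv φ))
    (hψ : Differentiable ℝ ψ) (hψ' : Differentiable ℝ (deriv ψ))
    (hφpos : ∀ t : ℝ, 0 < φ t) (hψpos : ∀ t : ℝ, 0 < ψ t)
    (hφeq : ∀ t : ℝ, -(deriv (deriv φ) t) + γ * φ t =
      φ t ^ (p-1) + ν*α * φ t ^ (α-1) * ψ t ^ β)
    (hψeq : ∀ t : ℝ, -(deriv (deriv ψ) t) + γ * ψ t =
      ψ t ^ (p-1) + ν*β * φ t ^ α * ψ t ^ (β-1)) :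
    ∀ t : ℝ,
      deriv (fun s => deriv φ s * ψ s - φ s * deriv ψ s) t +
        φ t * ψ t ^ (p-1) *
          ((φ t / ψ t) ^ (p-2) + ν*α * (φ t / ψ t) ^ (α-2) - 1 - ν*β * (φ t / ψ t) ^ α) = 0 :=
  stmt_general p ν α β γ hαβ φ ψ hφ hφ' hψ hψ' hφpos hψpos hφeq hψeq
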